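/- Let f be a function on [-1,1] whose Chebyshev coefficients satisfy |a_j| ≤ 2V/(π j(j−1)⋯(j−m)) for all j > m, for some V > 0 and integer m ≥ 1. If an n-point quadrature rule with weights summing to K is exact for polynomials of degree ≤ 2n−1 against a nonnegative weight with total mass K, and 2n > m+1, and the Chebyshev series of f converges uniformly, then the quadrature error is at most 4KV/(π m (2n−1)(2n−2)⋯(2n−m)). -/

import Mathlib

open Polynomial intervalIntegral Filter

/-!
The quadrature error `E g = ∫ g w - ∑ W_k g(x_k)` is linear, vanishes on `T_j` for `j < 2n` by
exactness, and is at most `2K` on every `T_j` because `|T_j| ≤ 1` on `[-1, 1]`. On a partial sum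
of the Chebyshev series it is therefore bounded by `(2V/π) (2K) ∑_{j ≥ 2n} 1/(j(j-1)⋯(j-m))`,
and the terms of this tail telescope, `1/(j⋯(j-m)) = g(j) - g(j+1)` with
`g(j) = 1/(m (j-1)⋯(j-m))`, so the tail is at most `g(2n)`. Since `E` is continuous for uniform
convergence on `[-1, 1]`, the bound passes to the limit `f`.
-/

open Finset Topology

lemma prod_range_sub_pos {k : ℕ} {y : ℝ} (hy : (k : ℝ) - 1 < y) :
    0 < ∏ i ∈ range k, (y - i) :=
  prod_pos fun i hi => by
    have : (i : ℝ) + 1 ≤ k := by exact_mod_cast mem_range.1 hi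
    linarith

lemma inv_prod_range_succ_sub_eq {m : ℕ} (hm : 1 ≤ m) {y : ℝ} (hy : (m : ℝ) < y) :
    (∏ i ∈ range (m + 1), (y - i))⁻¹ =
      ((m : ℝ) * ∏ i ∈ range m, (y - 1 - i))⁻¹ - ((m : ℝ) * ∏ i ∈ range m, (y - i))⁻¹ := by
  have hA := prod_range_sub_pos (k := m) (y := y - 1) (by linarith)
  have hP := prod_range_sub_pos (k := m) (y := y) (by linarith)
  have hm0 : (0 : ℝ) < m := by exact_mod_cast hm
  have hy0 : y ≠ 0 := by linarith
  have hlow : ∏ i ∈ range (m + 1), (y - i) = y * ∏ i ∈ range m, (y - 1 - i) := by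
    rw [prod_range_succ']
    push_cast
    rw [sub_zero, mul_comm]
    congr 1
    exact prod_congr rfl fun i _ => by ring
  have hhigh : ∏ i ∈ range (m + 1), (y - i) = (∏ i ∈ range m, (y - i)) * (y - m) :=
    prod_range_succ _ _
  rw [hlow] at hhigh ⊢
  field_simp
  linear_combination hhigh

lemma sum_Ico_inv_prod_range_succ_sub_le {m J : ℕ} (hm : 1 ≤ m) (hJ : m < J) (M : ℕ) :
    ∑ j ∈ Ico J M, (∏ i ∈ range (m + 1), ((j : ℝ) - i))⁻¹ ≤
      ((m : ℝ) * ∏ i ∈ range m, ((J : ℝ) - 1 - i))⁻¹ := by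
  set g : ℕ → ℝ := fun j => ((m : ℝ) * ∏ i ∈ range m, ((j : ℝ) - 1 - i))⁻¹
  have hg : ∀ j, m < j → 0 ≤ g j := fun j hj => by
    have hmj : (m : ℝ) < j := mod_cast hj
    have := prod_range_sub_pos (k := m) (y := (j : ℝ) - 1) (by linarith)
    positivity
  have htel : ∀ k ∈ range (M - J), (∏ i ∈ range (m + 1), (((J + k : ℕ) : ℝ) - i))⁻¹ =
      g (J + k) - g (J + (k + 1)) := fun k _ => by
    rw [inv_prod_range_succ_sub_eq hm (by exact_mod_cast (by omega : m < J + k))]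
    simp only [g]
    push_cast
    ring_nf
  rw [sum_Ico_eq_sum_range, sum_congr rfl htel, sum_range_sub' (fun k => g (J + k)), add_zero]
  exact sub_le_self _ (hg _ (by omega))

lemma abs_sum_mul_le_of_abs_le_inv_prod {m J : ℕ} (hm : 1 ≤ m) (hJ : m < J)
    {a c : ℕ → ℝ} {B C : ℝ} (hB : 0 ≤ B)
    (ha : ∀ j, m < j → |a j| ≤ B / ∏ i ∈ range (m + 1), ((j : ℝ) - i))
    (hc : ∀ j, |c j| ≤ C) (hc_zero : ∀ j < J, c j = 0) (N : ℕ) :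
    |∑ j ∈ range N, a j * c j| ≤ B * C / (m * ∏ i ∈ range m, ((J : ℝ) - 1 - i)) := by
  have hC : 0 ≤ C := (abs_nonneg _).trans (hc 0)
  have hsupp : ∑ j ∈ range N, a j * c j = ∑ j ∈ Ico J N, a j * c j := by
    refine (sum_subset (fun j hj => ?_) fun j hj hj' => ?_).symm
    · simp only [mem_Ico, mem_range] at hj ⊢; omega
    · simp only [mem_Ico, mem_range, not_and, not_lt] at hj hj'
      rw [hc_zero j (by omega), mul_zero]
  calc |∑ j ∈ range N, a j * c j|
      ≤ ∑ j ∈ Ico J N, |a j * c j| := hsupp ▸ abs_sum_le_sum_abs _ _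
    _ ≤ ∑ j ∈ Ico J N, B * C * (∏ i ∈ range (m + 1), ((j : ℝ) - i))⁻¹ := by
        refine sum_le_sum fun j hj => ?_
        have hmj : m < j := by simp only [mem_Ico] at hj; omega
        rw [abs_mul, mul_right_comm, ← div_eq_mul_inv]
        exact mul_le_mul (ha j hmj) (hc j) (abs_nonneg _) ((abs_nonneg _).trans (ha j hmj))
    _ ≤ B * C * ((m : ℝ) * ∏ i ∈ range m, ((J : ℝ) - 1 - i))⁻¹ := by
        rw [← mul_sum]
        exact mul_le_mul_of_nonneg_left (sum_Ico_inv_prod_range_succ_sub_le hm hJ N) (by positivity)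

section QuadratureError

variable {ι : Type*} [Fintype ι] {a b : ℝ} {w : ℝ → ℝ} {x W : ι → ℝ}

noncomputable def quadError (a b : ℝ) (w : ℝ → ℝ) (x W : ι → ℝ) (g : ℝ → ℝ) : ℝ :=
  (∫ t in a..b, g t * w t) - ∑ k, W k * g (x k)

lemma quadError_sum_mul {κ : Type*} (s : Finset κ) (c : κ → ℝ) {g : κ → ℝ → ℝ}
    (hw : IntervalIntegrable w MeasureTheory.volume a b)
    (hg : ∀ j ∈ s, ContinuousOn (g j) (Set.uIcc a b)) :
    quadError a b w x W (fun t => ∑ j ∈ s, c j * g j t) =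
      ∑ j ∈ s, c j * quadError a b w x W (g j) := by
  simp only [quadError, sum_mul, mul_sub, sum_sub_distrib, mul_sum]
  rw [integral_finsetSum fun j hj => ((hw.continuousOn_mul (hg j hj)).const_mul (c j)).congr
    fun t _ => mul_assoc _ _ _ |>.symm, sum_comm]
  congr 1
  · exact sum_congr rfl fun j _ => by simp only [mul_assoc, integral_const_mul]
  · exact sum_congr rfl fun j _ => sum_congr rfl fun k _ => by ring

lemma quadError_sub {g h : ℝ → ℝ} (hw : IntervalIntegrable w MeasureTheory.volume a b)
    (hg : ContinuousOn g (Set.uIcc a b)) (hh : ContinuousOn h (Set.uIcc a b)) :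
    quadError a b w x W (fun t => g t - h t) =
      quadError a b w x W g - quadError a b w x W h := by
  simp only [quadError, sub_mul, mul_sub, sum_sub_distrib]
  rw [integral_sub (hw.continuousOn_mul hg) (hw.continuousOn_mul hh)]
  ring

lemma abs_quadError_le (hab : a ≤ b) (hw : IntervalIntegrable w MeasureTheory.volume a b)
    (hw_nonneg : ∀ t ∈ Set.Icc a b, 0 ≤ w t) (hW_nonneg : ∀ k, 0 ≤ W k)
    (hx : ∀ k, x k ∈ Set.Icc a b) {g : ℝ → ℝ} {M : ℝ} (hg : ∀ t ∈ Set.Icc a b, |g t| ≤ M) :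
    |quadError a b w x W g| ≤ M * ((∫ t in a..b, w t) + ∑ k, W k) := by
  have hint : |∫ t in a..b, g t * w t| ≤ M * ∫ t in a..b, w t := by
    refine (norm_integral_le_of_norm_le (f := fun t => g t * w t) hab
      (MeasureTheory.ae_of_all _ fun t ht => ?_) (hw.const_mul M)).trans_eq
      (integral_const_mul M w)
    have ht' : t ∈ Set.Icc a b := Set.Ioc_subset_Icc_self ht
    rw [Real.norm_eq_abs, abs_mul, abs_of_nonneg (hw_nonneg t ht')]
    exact mul_le_mul_of_nonneg_right (hg t ht') (hw_nonneg t ht')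
  have hsum : |∑ k, W k * g (x k)| ≤ M * ∑ k, W k := by
    rw [mul_sum]
    refine (abs_sum_le_sum_abs _ _).trans (sum_le_sum fun k _ => ?_)
    rw [abs_mul, abs_of_nonneg (hW_nonneg k), mul_comm M]
    exact mul_le_mul_of_nonneg_left (hg _ (hx k)) (hW_nonneg k)
  rw [mul_add]
  exact (abs_sub _ _).trans (add_le_add hint hsum)

lemma tendsto_quadError_of_tendstoUniformlyOn {κ : Type*} {l : Filter κ} [l.NeBot]
    (hab : a ≤ b) (hw : IntervalIntegrable w MeasureTheory.volume a b)
    (hw_nonneg : ∀ t ∈ Set.Icc a b, 0 ≤ w t) (hW_nonneg : ∀ k, 0 ≤ W k)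
    (hx : ∀ k, x k ∈ Set.Icc a b) {F : κ → ℝ → ℝ} {g : ℝ → ℝ}
    (hF : ∀ N, ContinuousOn (F N) (Set.Icc a b)) (hFg : TendstoUniformlyOn F g l (Set.Icc a b)) :
    Tendsto (fun N => quadError a b w x W (F N)) l (𝓝 (quadError a b w x W g)) := by
  have hg := hFg.continuousOn (Frequently.of_forall hF)
  set C := (∫ t in a..b, w t) + ∑ k, W k
  have hC : 0 ≤ C := add_nonneg (integral_nonneg hab hw_nonneg)
    (sum_nonneg fun k _ => hW_nonneg k)
  rw [Metric.tendsto_nhds]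
  intro ε hε
  filter_upwards [Metric.tendstoUniformlyOn_iff.1 hFg (ε / (C + 1)) (by positivity)] with N hN
  have hFg_le : ∀ t ∈ Set.Icc a b, |F N t - g t| ≤ ε / (C + 1) := fun t ht => by
    rw [abs_sub_comm, ← Real.dist_eq]; exact (hN t ht).le
  rw [Real.dist_eq, ← quadError_sub hw (Set.uIcc_of_le hab ▸ hF N) (Set.uIcc_of_le hab ▸ hg)]
  calc _ ≤ ε / (C + 1) * C := abs_quadError_le hab hw hw_nonneg hW_nonneg hx hFg_le
    _ < ε := by rw [div_mul_eq_mul_div, div_lt_iff₀ (by positivity)]; nlinarith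

lemma abs_quadError_T_le (hw : IntervalIntegrable w MeasureTheory.volume (-1) 1)
    (hw_nonneg : ∀ t ∈ Set.Icc (-1 : ℝ) 1, 0 ≤ w t) (hW_nonneg : ∀ k, 0 ≤ W k)
    (hx : ∀ k, x k ∈ Set.Icc (-1 : ℝ) 1) {K : ℝ} (hK : K = ∫ t in (-1 : ℝ)..1, w t)
    (hW_sum : ∑ k, W k = K) (j : ℕ) :
    |quadError (-1) 1 w x W (Chebyshev.T ℝ j).eval| ≤ 2 * K := by
  have := abs_quadError_le (by norm_num) hw hw_nonneg hW_nonneg hx (M := 1)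
    (g := (Chebyshev.T ℝ j).eval) fun t ht => Chebyshev.abs_eval_T_real_le_one _ (abs_le.2 ht)
  rwa [← hK, hW_sum, one_mul, ← two_mul] at this

end QuadratureError

theorem gauss_quadrature_error_differentiable (n m : ℕ) (hm : 1 ≤ m) (hn : m + 1 < 2 * n)
    (f : ℝ → ℝ) (a : ℕ → ℝ) (V : ℝ) (hV : 0 < V)
    (hcoef : ∀ j : ℕ, m < j →
      |a j| ≤ 2 * V / (Real.pi * ∏ i ∈ Finset.range (m + 1), ((j : ℝ) - (i : ℝ))))
    (hunif : TendstoUniformlyOn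
      (fun N x => ∑ j ∈ Finset.range N, a j * (Chebyshev.T ℝ j).eval x) f
      atTop (Set.Icc (-1 : ℝ) 1))
    (w : ℝ → ℝ) (hw : IntervalIntegrable w MeasureTheory.volume (-1) 1)
    (hwnonneg : ∀ x ∈ Set.Icc (-1 : ℝ) 1, 0 ≤ w x)
    (K : ℝ) (hK : K = ∫ x in (-1 : ℝ)..1, w x)
    (x : Fin n → ℝ) (hx : ∀ k, x k ∈ Set.Icc (-1 : ℝ) 1)
    (W : Fin n → ℝ) (hWnonneg : ∀ k, 0 ≤ W k) (hWsum : ∑ k, W k = K)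
    (hexact : ∀ p : Polynomial ℝ, p.natDegree ≤ 2 * n - 1 →
      ∑ k, W k * p.eval (x k) = ∫ t in (-1 : ℝ)..1, p.eval t * w t) :
    |(∫ t in (-1 : ℝ)..1, f t * w t) - ∑ k, W k * f (x k)| ≤
      4 * K * V / (Real.pi * m * ∏ i ∈ Finset.range m, ((2 * n : ℝ) - 1 - (i : ℝ))) := by
  have hlim : Tendsto (fun N => quadError (-1) 1 w x W
      fun t => ∑ j ∈ range N, a j * (Chebyshev.T ℝ j).eval t) atTop
      (𝓝 (quadError (-1) 1 w x W f)) :=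
    tendsto_quadError_of_tendstoUniformlyOn (by norm_num) hw hwnonneg hWnonneg hx
      (fun N => by fun_prop) hunif
  have hexact_T : ∀ j < 2 * n, quadError (-1) 1 w x W (Chebyshev.T ℝ j).eval = 0 := fun j hj =>
    sub_eq_zero.2 (hexact _ (by rw [Chebyshev.natDegree_T]; omega)).symm
  refine le_of_tendsto' hlim.abs fun N => ?_
  rw [quadError_sum_mul (g := fun (j : ℕ) => (Chebyshev.T ℝ j).eval) _ _ hw
    fun j _ => (Chebyshev.T ℝ j).continuous.continuousOn]
  calc _ ≤ 2 * V / Real.pi * (2 * K) / (m * ∏ i ∈ range m, (((2 * n : ℕ) : ℝ) - 1 - i)) :=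
        abs_sum_mul_le_of_abs_le_inv_prod hm (by omega) (by positivity)
          (fun j hj => (div_div (2 * V) _ _).symm ▸ hcoef j hj)
          (abs_quadError_T_le hw hwnonneg hWnonneg hx hK hWsum) hexact_T N
    _ = _ := by push_cast; ring
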